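/- Let σ, λ, and ω be such that |𝔽_{𝕋ⁿ}σ(k,m)| ≤ ω(k) λ(m) for all k,m ∈ ħℤⁿ, with λ ∈ ℓ¹(ħℤⁿ) nonnegative and ω: ħℤⁿ → (0,∞) satisfying ω(k) → 0 as |k| → ∞. Then Op(σ): ℓᵖ(ħℤⁿ) → ℓᵖ(ħℤⁿ) is a compact operator for every 1 ≤ p < ∞. -/

import Mathlib

/-!
Truncating the output of `T` to a finite set `S` of lattice points gives a finite-rank, hence
compact, operator. Off `S` the kernel is bounded by `ε λ(m - k)` with `ε = sup_{k ∉ S} ω(k)`, so by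
Young's inequality `‖λ ⋆ |g|‖_p ≤ ‖λ‖₁ ‖g‖_p` the remainder has operator norm at most `ε ‖λ‖₁`.
This tends to `0` as `S` exhausts the lattice, and compact operators are norm-closed.
-/

open MeasureTheory Complex ENNReal

noncomputable section

abbrev Zn (n : ℕ) := Fin n → ℤ

/-- The fundamental domain of the torus `𝕋ⁿ = ℝⁿ/ℤⁿ`. -/
def box (n : ℕ) : Set (Fin n → ℝ) := Set.univ.pi fun _ => Set.Ioc (0:ℝ) 1

/-- `e^{2πi k·θ}`. -/
def eChar (n : ℕ) (k : Zn n) (θ : Fin n → ℝ) : ℂ :=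
  Complex.exp (2 * Real.pi * Complex.I * (∑ j, (k j : ℂ) * (θ j : ℂ)))

/-- The (semi-classical) Fourier transform on the lattice (`ħℤⁿ` identified with `ℤⁿ`,
so that `(k·θ)/ħ = m·θ` for `k = ħm`): `𝔽f(θ) = ∑_k e^{-2πi k·θ} f(k)`. -/
def latticeFT (n : ℕ) (f : Zn n → ℂ) (θ : Fin n → ℝ) : ℂ :=
  ∑' k : Zn n, Complex.exp (-(2 * Real.pi * Complex.I) * (∑ j, (k j : ℂ) * (θ j : ℂ))) * f k

/-- Euclidean norm of an integer lattice point. -/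
def znorm (n : ℕ) (k : Zn n) : ℝ := Real.sqrt (∑ j, ((k j : ℝ))^2)

namespace lp

section Truncate

variable {α 𝕜 : Type*} [NormedRing 𝕜] {E : α → Type*} [∀ i, NormedAddCommGroup (E i)]
  [∀ i, Module 𝕜 (E i)] [∀ i, IsBoundedSMul 𝕜 (E i)] {p : ℝ≥0∞} [Fact (1 ≤ p)] [DecidableEq α]

variable (𝕜 E p) in
def truncate (S : Finset α) : lp E p →L[𝕜] lp E p :=
  ∑ i ∈ S, (singleContinuousLinearMap 𝕜 E p i).comp (evalCLM 𝕜 E p i)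

theorem truncate_apply (S : Finset α) (x : lp E p) (i : α) :
    truncate 𝕜 E p S x i = if i ∈ S then x i else 0 := by
  simp only [truncate, _root_.sum_apply, ContinuousLinearMap.comp_apply,
    singleContinuousLinearMap_apply, coeFn_sum, lp.coeFn_single, Finset.sum_apply]
  exact Finset.sum_pi_single i (fun j => x j) S

theorem isCompactOperator_truncate [∀ i, LocallyCompactSpace (E i)] (S : Finset α) :
    IsCompactOperator (truncate 𝕜 E p S) :=
  Finset.sum_induction _ (fun A : lp E p →L[𝕜] lp E p => IsCompactOperator A)
    (fun _ _ hA hB => hA.add hB) isCompactOperator_zero fun i _ =>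
      (isCompactOperator_of_locallyCompactSpace_dom (evalCLM 𝕜 E p i)).clm_comp
        (singleContinuousLinearMap 𝕜 E p i)

end Truncate

section Convolution

variable {G : Type*} [AddGroup G] {E : Type*} [NormedAddCommGroup E] {p : ℝ≥0∞}

def shift (hp : 0 < p.toReal) (j : G) (x : lp (fun _ : G => E) p) : lp (fun _ : G => E) p :=
  ⟨fun k => x (j + k), memℓp_gen <|
    ((Equiv.addLeft j).summable_iff (f := fun k => ‖x k‖ ^ p.toReal)).2 ((lp.memℓp x).summable hp)⟩

theorem norm_shift (hp : 0 < p.toReal) (j : G) (x : lp (fun _ : G => E) p) :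
    ‖shift hp j x‖ = ‖x‖ := by
  rw [norm_eq_tsum_rpow hp, norm_eq_tsum_rpow hp]
  exact congrArg (· ^ (1 / p.toReal)) ((Equiv.addLeft j).tsum_eq fun k => ‖x k‖ ^ p.toReal)

-- Minkowski's inequality: `u = ∑' j, lam j • shift j |g|` converges absolutely in `ℓᵖ`.
theorem exists_convolution_norm_le [Fact (1 ≤ p)] (hp : p ≠ ⊤) {lam : G → ℝ}
    (hlam0 : ∀ j, 0 ≤ lam j) (hlam : Summable lam) (g : lp (fun _ : G => E) p) :
    ∃ u : lp (fun _ : G => ℝ) p,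
      (∀ k, u k = ∑' j, lam j * ‖g (j + k)‖) ∧ ‖u‖ ≤ (∑' j, lam j) * ‖g‖ := by
  have hp0 : 0 < p.toReal := toReal_pos (zero_lt_one.trans_le Fact.out).ne' hp
  set w : G → lp (fun _ : G => ℝ) p := fun j => lam j • shift hp0 j (toNorm g)
  have hw : ∀ j, ‖w j‖ = lam j * ‖g‖ := fun j => by
    rw [norm_smul, norm_shift, norm_toNorm, Real.norm_of_nonneg (hlam0 j)]
  have hsum : Summable fun j => ‖w j‖ := by simpa only [hw] using hlam.mul_right ‖g‖
  refine ⟨∑' j, w j, fun k => ?_, ?_⟩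
  · exact (evalCLM ℝ _ p k).map_tsum hsum.of_norm
  · calc ‖∑' j, w j‖ ≤ ∑' j, ‖w j‖ := norm_tsum_le_tsum_norm hsum
      _ = (∑' j, lam j) * ‖g‖ := by simp only [hw, tsum_mul_right]

end Convolution

end lp

theorem norm_tsum_mul_le_of_norm_le {ι R : Type*} [NormedRing R] {g K : ι → R} {lam : ι → ℝ}
    {C a : ℝ} (hg : ∀ i, ‖g i‖ ≤ C) (hlam : Summable lam) (hK : ∀ i, ‖K i‖ ≤ a * lam i) :
    ‖∑' i, g i * K i‖ ≤ a * ∑' i, lam i * ‖g i‖ := by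
  have hK0 : ∀ i, 0 ≤ a * lam i := fun i => (norm_nonneg _).trans (hK i)
  have hmajor : Summable fun i => ‖g i‖ * (a * lam i) :=
    .of_nonneg_of_le (fun i => mul_nonneg (norm_nonneg _) (hK0 i))
      (fun i => mul_le_mul_of_nonneg_right (hg i) (hK0 i)) ((hlam.mul_left a).mul_left C)
  have hle : ∀ i, ‖g i * K i‖ ≤ ‖g i‖ * (a * lam i) := fun i =>
    (norm_mul_le _ _).trans (mul_le_mul_of_nonneg_left (hK i) (norm_nonneg _))
  have hsum : Summable fun i => ‖g i * K i‖ := .of_nonneg_of_le (fun _ => norm_nonneg _) hle hmajor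
  calc ‖∑' i, g i * K i‖ ≤ ∑' i, ‖g i * K i‖ := norm_tsum_le_tsum_norm hsum
    _ ≤ ∑' i, ‖g i‖ * (a * lam i) := hsum.tsum_le_tsum hle hmajor
    _ = a * ∑' i, lam i * ‖g i‖ := by
      rw [← tsum_mul_left]
      exact tsum_congr fun i => by ring

open Filter Topology
open scoped lp

section KernelOperator

variable {G : Type*} [AddGroup G] {𝕜 : Type*} [RCLike 𝕜] {p : ℝ≥0∞} [Fact (1 ≤ p)]
  {lam ω : G → ℝ} {K : G → G → 𝕜} {T : ℓ^p(G, 𝕜) →L[𝕜] ℓ^p(G, 𝕜)}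

theorem norm_sub_truncate_comp_le [DecidableEq G] (hp : p ≠ ⊤) (hlam0 : ∀ m, 0 ≤ lam m)
    (hlam : Summable lam) (hK : ∀ k m, ‖K k m‖ ≤ ω k * lam m)
    (hT : ∀ g k, T g k = ∑' m, g m * K k (m - k)) {S : Finset G} {ε : ℝ} (hε : 0 ≤ ε)
    (hS : ∀ k ∉ S, ω k ≤ ε) :
    ‖T - (lp.truncate 𝕜 _ p S).comp T‖ ≤ ε * ∑' j, lam j := by
  have hp0 : p ≠ 0 := (zero_lt_one.trans_le Fact.out).ne'
  have hL : 0 ≤ ∑' j, lam j := tsum_nonneg hlam0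
  refine ContinuousLinearMap.opNorm_le_bound _ (mul_nonneg hε hL) fun g => ?_
  obtain ⟨u, hu, hu_norm⟩ := lp.exists_convolution_norm_le hp hlam0 hlam g
  have hu0 : ∀ k, 0 ≤ u k := fun k =>
    hu k ▸ tsum_nonneg fun j => mul_nonneg (hlam0 j) (norm_nonneg _)
  have hpointwise : ∀ k, ‖(T g - lp.truncate 𝕜 _ p S (T g)) k‖ ≤ ‖(ε • u) k‖ := by
    intro k
    rw [lp.coeFn_sub, Pi.sub_apply, lp.truncate_apply, lp.coeFn_smul, Pi.smul_apply, norm_smul,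
      Real.norm_of_nonneg hε, Real.norm_of_nonneg (hu0 k)]
    split_ifs with hk
    · rw [sub_self, norm_zero]
      exact mul_nonneg hε (hu0 k)
    · have hshift : ∑' m, g m * K k (m - k) = ∑' j, g (j + k) * K k j := by
        rw [← (Equiv.addRight k).tsum_eq (fun m => g m * K k (m - k))]
        simp only [Equiv.coe_addRight, add_sub_cancel_right]
      rw [sub_zero, hT, hshift]
      refine (norm_tsum_mul_le_of_norm_le (fun j => lp.norm_apply_le_norm hp0 g _)
        hlam (hK k)).trans ?_
      rw [← hu k]
      exact mul_le_mul_of_nonneg_right (hS k hk) (hu0 k)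
  calc ‖(T - (lp.truncate 𝕜 _ p S).comp T) g‖ = ‖T g - lp.truncate 𝕜 _ p S (T g)‖ := rfl
    _ ≤ ‖ε • u‖ := lp.norm_mono hp0 hpointwise
    _ ≤ ε * ((∑' j, lam j) * ‖g‖) := by
      rw [norm_smul, Real.norm_of_nonneg hε]
      exact mul_le_mul_of_nonneg_left hu_norm hε
    _ = ε * (∑' j, lam j) * ‖g‖ := (mul_assoc _ _ _).symm

theorem tendsto_truncate_comp [DecidableEq G] (hp : p ≠ ⊤) (hlam0 : ∀ m, 0 ≤ lam m)
    (hlam : Summable lam) (hω : Tendsto ω cofinite (𝓝 0)) (hK : ∀ k m, ‖K k m‖ ≤ ω k * lam m)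
    (hT : ∀ g k, T g k = ∑' m, g m * K k (m - k)) :
    Tendsto (fun S : Finset G => (lp.truncate 𝕜 _ p S).comp T) atTop (𝓝 T) := by
  set L := ∑' j, lam j
  have hL : 0 ≤ L := tsum_nonneg hlam0
  rw [Metric.tendsto_atTop]
  intro ε hε
  have hδ : 0 < ε / (L + 1) := by positivity
  have hfin : {k | ¬ ω k < ε / (L + 1)}.Finite :=
    eventually_cofinite.1 (hω.eventually (gt_mem_nhds hδ))
  refine ⟨hfin.toFinset, fun S hS => ?_⟩
  have hS' : ∀ k ∉ S, ω k ≤ ε / (L + 1) := fun k hk =>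
    (not_not.1 fun h => hk (hS (hfin.mem_toFinset.2 h))).le
  rw [dist_comm, dist_eq_norm]
  calc ‖T - (lp.truncate 𝕜 _ p S).comp T‖ ≤ ε / (L + 1) * L :=
        norm_sub_truncate_comp_le hp hlam0 hlam hK hT hδ.le hS'
    _ < ε := by
      rw [div_mul_eq_mul_div, div_lt_iff₀ (by positivity)]
      nlinarith

theorem isCompactOperator_of_norm_kernel_le (hp : p ≠ ⊤) (hlam0 : ∀ m, 0 ≤ lam m)
    (hlam : Summable lam) (hω : Tendsto ω cofinite (𝓝 0)) (hK : ∀ k m, ‖K k m‖ ≤ ω k * lam m)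
    (hT : ∀ g k, T g k = ∑' m, g m * K k (m - k)) :
    IsCompactOperator T := by
  classical
  exact isCompactOperator_of_tendsto (tendsto_truncate_comp hp hlam0 hlam hω hK hT)
    (.of_forall fun S => (lp.isCompactOperator_truncate S).comp_clm T)

end KernelOperator

theorem lp_compactness_general
    (n : ℕ)
    (p : ℝ≥0∞) [hp1 : Fact (1 ≤ p)] (hp2 : p ≠ ⊤)
    (lam : Zn n → ℝ) (hlam0 : ∀ m, 0 ≤ lam m) (hlam : Summable lam)
    (ω : Zn n → ℝ)
    (hωlim : Filter.Tendsto ω Filter.cofinite (nhds 0))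
    (Fσ : Zn n → Zn n → ℂ)
    (hbound : ∀ k m : Zn n, ‖Fσ k m‖ ≤ ω k * lam m)
    (T : lp (fun _ : Zn n => ℂ) p →L[ℂ] lp (fun _ : Zn n => ℂ) p)
    (hT : ∀ (g : lp (fun _ : Zn n => ℂ) p) (k : Zn n),
      (T g : Zn n → ℂ) k = ∑' m : Zn n, (g : Zn n → ℂ) m * Fσ k (m - k)) :
    IsCompactOperator T :=
  isCompactOperator_of_norm_kernel_le hp2 hlam0 hlam hωlim hbound hT

/-- If `|𝔽_{𝕋ⁿ}σ(k,m)| ≤ ω(k)λ(m)` with `λ ∈ ℓ¹` nonnegative and `ω(k) → 0` as `|k| → ∞`,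
then `Op(σ) : ℓᵖ(ħℤⁿ) → ℓᵖ(ħℤⁿ)` is compact for every `1 ≤ p < ∞`. -/
theorem lp_compactness
    (n : ℕ) (hbar : ℝ) (hh0 : 0 < hbar) (hh1 : hbar ≤ 1)
    (p : ℝ≥0∞) [hp1 : Fact (1 ≤ p)] (hp2 : p ≠ ⊤)
    (lam : Zn n → ℝ) (hlam0 : ∀ m, 0 ≤ lam m) (hlam : Summable lam)
    (ω : Zn n → ℝ) (hω0 : ∀ k, 0 < ω k)
    (hωlim : Filter.Tendsto ω Filter.cofinite (nhds 0))
    (σ : Zn n → (Fin n → ℝ) → ℂ) (hmeas : ∀ k, Measurable (σ k))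
    (Fσ : Zn n → Zn n → ℂ)
    (hFσ : ∀ k m : Zn n, Fσ k m = ∫ θ in box n, (eChar n m θ)⁻¹ * σ k θ)
    (hbound : ∀ k m : Zn n, ‖Fσ k m‖ ≤ ω k * lam m)
    (T : lp (fun _ : Zn n => ℂ) p →L[ℂ] lp (fun _ : Zn n => ℂ) p)
    (hT : ∀ (g : lp (fun _ : Zn n => ℂ) p) (k : Zn n),
      (T g : Zn n → ℂ) k = ∑' m : Zn n, (g : Zn n → ℂ) m * Fσ k (m - k)) :
    IsCompactOperator T :=
  lp_compactness_general n p (hp1 := hp1) hp2 lam hlam0 hlam ω hωlim Fσ hbound T hT
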